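/- For every finite undirected graph G = (V, E), the minimum over all valid schedules D of the depth of D equals the chromatic number χ(G). Here a valid schedule is a DAG on V in which, for every edge {u,v} of G, there is a directed path from u to v or from v to u, and the depth is the maximum number of vertices on a directed path. -/

import Mathlib

/-- A (nonempty, simple) directed path in the digraph with edge relation `S`,
represented as a list of vertices. -/
def IsDipath {V : Type*} (S : V → V → Prop) (l : List V) : Prop :=
  l ≠ [] ∧ l.Nodup ∧ l.Chain' S

/-- The depth of a digraph: the maximum number of vertices on a directed path. -/
noncomputable def depthD {V : Type*} (S : V → V → Prop) : ℕ :=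
  sSup {n | ∃ l : List V, IsDipath S l ∧ l.length = n}

/-- The depth of a vertex: the maximum number of vertices on a directed path ending at `v`. -/
noncomputable def vdepth {V : Type*} (S : V → V → Prop) (v : V) : ℕ :=
  sSup {n | ∃ l : List V, IsDipath S l ∧ l.getLast? = some v ∧ l.length = n}

/-- The weighted depth (latency): the maximum over directed paths of the sum of
vertex weights along the path. -/
noncomputable def wdepth {V : Type*} (S : V → V → Prop) (len : V → ℕ+) : ℕ :=
  sSup {n | ∃ l : List V, IsDipath S l ∧ (l.map fun v => (len v : ℕ)).sum = n}

/-- Acyclicity of a digraph (a DAG). -/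
def Acyclic {V : Type*} (S : V → V → Prop) : Prop :=
  ∀ v : V, ¬ Relation.TransGen S v v

/-- A valid schedule for the conflict graph `G`: an acyclic digraph on the same
vertices such that every edge of `G` is connected by a directed path in some direction. -/
def ValidSchedule {V : Type*} (G : SimpleGraph V) (S : V → V → Prop) : Prop :=
  Acyclic S ∧ ∀ u v : V, G.Adj u v →
    Relation.TransGen S u v ∨ Relation.TransGen S v u


/-!
Colouring each vertex `v` by `vdepth S v`, the number of vertices of a longest directed path of `S`
ending at `v`, uses `depthD S` colours, and it is proper when `S` is a valid schedule: appending `v`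
to a longest path ending at `u` shows (by acyclicity) that `vdepth` strictly increases along every
arc, hence along every directed path, and the ends of each edge of `G` are joined by one.
Conversely, orienting each edge of `G` towards the larger colour of a proper colouring by `k`
ordered colours gives a valid schedule along whose paths the colours strictly increase, so its
depth is at most `k`.
-/

section Schedule

variable {V : Type*} {S : V → V → Prop}

lemma lt_of_transGen_of_rel_imp_lt {α : Type*} [Preorder α] {f : V → α}
    (hf : ∀ ⦃u v⦄, S u v → f u < f v) {u v : V} (h : Relation.TransGen S u v) : f u < f v := by
  induction h with
  | single huv => exact hf huv
  | tail _ hvw ih => exact ih.trans (hf hvw)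

lemma acyclic_of_rel_imp_lt {α : Type*} [Preorder α] {f : V → α}
    (hf : ∀ ⦃u v⦄, S u v → f u < f v) : Acyclic S :=
  fun _ h => (lt_of_transGen_of_rel_imp_lt hf h).false

lemma depthD_le_card_of_rel_imp_lt {α : Type*} [Preorder α] [Fintype α] {f : V → α}
    (hf : ∀ ⦃u v⦄, S u v → f u < f v) : depthD S ≤ Fintype.card α := by
  refine csSup_le' ?_
  rintro _ ⟨l, ⟨-, -, hchain⟩, rfl⟩
  have hsorted : (l.map f).Pairwise (· < ·) :=
    List.isChain_iff_pairwise.mp ((List.isChain_map f).mpr (hchain.imp hf))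
  simpa using List.Nodup.length_le_card (hsorted.imp ne_of_lt)

lemma IsDipath.length_le_card [Fintype V] {l : List V} (hl : IsDipath S l) :
    l.length ≤ Fintype.card V :=
  hl.2.1.length_le_card

lemma IsDipath.reflTransGen_of_mem {l : List V} {a b : V} (hl : IsDipath S l)
    (hlast : l.getLast? = some b) (ha : a ∈ l) : Relation.ReflTransGen S a b := by
  refine hl.2.2.backwards_induction (Relation.ReflTransGen S · b) l
    (fun _ _ hxy hy => hy.head hxy) (fun hne => ?_) a ha
  rw [List.getLast_eq_iff_getLast?_eq_some hne |>.mpr hlast]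

lemma IsDipath.append_singleton {l : List V} {u v : V} (hl : IsDipath S l)
    (hlast : l.getLast? = some u) (huv : S u v) (hv : v ∉ l) : IsDipath S (l ++ [v]) := by
  refine ⟨List.concat_ne_nil v l, ?_, ?_⟩
  · rw [← List.concat_eq_append, List.nodup_concat]
    exact ⟨hv, hl.2.1⟩
  refine hl.2.2.append (List.isChain_singleton v) ?_
  simp only [hlast, Option.mem_def, Option.some.injEq, List.head?_cons]
  rintro _ rfl _ rfl
  exact huv

lemma exists_isDipath_length_eq_vdepth [Fintype V] (v : V) :
    ∃ l : List V, IsDipath S l ∧ l.getLast? = some v ∧ l.length = vdepth S v := by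
  have hbdd : BddAbove {n | ∃ l : List V, IsDipath S l ∧ l.getLast? = some v ∧ l.length = n} :=
    ⟨Fintype.card V, fun _ ⟨_, hl, _, hlen⟩ => hlen ▸ hl.length_le_card⟩
  refine Nat.sSup_mem ?_ hbdd
  exact ⟨1, [v], ⟨by simp, by simp, List.isChain_singleton v⟩, rfl, rfl⟩

lemma le_vdepth [Fintype V] {l : List V} {v : V} (hl : IsDipath S l)
    (hlast : l.getLast? = some v) : l.length ≤ vdepth S v :=
  le_csSup ⟨Fintype.card V, fun _ ⟨_, hl, _, hlen⟩ => hlen ▸ hl.length_le_card⟩ ⟨l, hl, hlast, rfl⟩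

lemma one_le_vdepth [Fintype V] (v : V) : 1 ≤ vdepth S v :=
  le_vdepth (l := [v]) ⟨by simp, by simp, List.isChain_singleton v⟩ rfl

lemma vdepth_le_depthD [Fintype V] (v : V) : vdepth S v ≤ depthD S := by
  obtain ⟨l, hl, -, hlen⟩ := exists_isDipath_length_eq_vdepth (S := S) v
  exact hlen ▸ le_csSup ⟨Fintype.card V, fun _ ⟨_, hl, hlen⟩ => hlen ▸ hl.length_le_card⟩ ⟨l, hl, rfl⟩

lemma Acyclic.vdepth_lt_vdepth [Fintype V] (hS : Acyclic S) ⦃u v : V⦄ (huv : S u v) :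
    vdepth S u < vdepth S v := by
  obtain ⟨l, hl, hlast, hlen⟩ := exists_isDipath_length_eq_vdepth (S := S) u
  have hv : v ∉ l := fun hv => hS v (.tail' (hl.reflTransGen_of_mem hlast hv) huv)
  have := le_vdepth (v := v) (hl.append_singleton hlast huv hv) (by simp)
  simp only [List.length_append, List.length_singleton, hlen] at this
  omega

lemma ValidSchedule.colorable [Fintype V] {G : SimpleGraph V} (hS : ValidSchedule G S) :
    G.Colorable (depthD S) := by
  refine ⟨.mk (fun v => ⟨vdepth S v - 1, ?_⟩) fun {u v} huv hcolor => ?_⟩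
  · have := one_le_vdepth (S := S) v
    have := vdepth_le_depthD (S := S) v
    omega
  have hne : vdepth S u ≠ vdepth S v := by
    rcases hS.2 u v huv with h | h
    · exact (lt_of_transGen_of_rel_imp_lt hS.1.vdepth_lt_vdepth h).ne
    · exact (lt_of_transGen_of_rel_imp_lt hS.1.vdepth_lt_vdepth h).ne'
  have := one_le_vdepth (S := S) u
  have := one_le_vdepth (S := S) v
  simp only [Fin.mk.injEq] at hcolor
  omega

end Schedule

namespace SimpleGraph.Coloring

variable {V α : Type*} {G : SimpleGraph V} [LinearOrder α]

def orientation (C : G.Coloring α) (u v : V) : Prop :=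
  G.Adj u v ∧ C u < C v

lemma validSchedule_orientation (C : G.Coloring α) : ValidSchedule G C.orientation := by
  refine ⟨acyclic_of_rel_imp_lt fun _ _ h => h.2, fun u v huv => ?_⟩
  rcases (C.valid huv).lt_or_gt with h | h
  · exact .inl (.single ⟨huv, h⟩)
  · exact .inr (.single ⟨huv.symm, h⟩)

lemma depthD_orientation_le [Fintype α] (C : G.Coloring α) :
    depthD C.orientation ≤ Fintype.card α :=
  depthD_le_card_of_rel_imp_lt fun _ _ h => h.2

end SimpleGraph.Coloring

lemma SimpleGraph.Colorable.exists_validSchedule_depthD_le {V : Type*} {G : SimpleGraph V}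
    {n : ℕ} (h : G.Colorable n) : ∃ S, ValidSchedule G S ∧ depthD S ≤ n := by
  obtain ⟨C⟩ := h
  exact ⟨C.orientation, C.validSchedule_orientation, by simpa using C.depthD_orientation_le⟩

theorem stmt4_general {V : Type*} [Fintype V] (G : SimpleGraph V) :
    (↑(sInf {n : ℕ | ∃ S : V → V → Prop, ValidSchedule G S ∧ depthD S = n}) : ℕ∞)
      = G.chromaticNumber := by
  obtain ⟨k, hk⟩ := ENat.ne_top_iff_exists.mp
    (G.chromaticNumber_ne_top_iff_exists.mpr ⟨_, G.colorable_of_fintype⟩)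
  obtain ⟨S, hS, hSk⟩ :=
    (G.chromaticNumber_le_iff_colorable.mp hk.ge).exists_validSchedule_depthD_le
  have hmem : depthD S ∈ {n : ℕ | ∃ S : V → V → Prop, ValidSchedule G S ∧ depthD S = n} :=
    ⟨S, hS, rfl⟩
  obtain ⟨S₀, hS₀, hdepth⟩ := Nat.sInf_mem ⟨_, hmem⟩
  refine le_antisymm ?_ ?_
  · rw [← hk]
    exact_mod_cast (Nat.sInf_le hmem).trans hSk
  · exact hdepth ▸ hS₀.colorable.chromaticNumber_le

theorem stmt4 {V : Type*} [Fintype V] [Nonempty V] (G : SimpleGraph V) :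
    (↑(sInf {n : ℕ | ∃ S : V → V → Prop, ValidSchedule G S ∧ depthD S = n}) : ℕ∞)
      = G.chromaticNumber :=
  stmt4_general G
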